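/- (Theorem 3.2(ii), deterministic core.) Let q ∈ (1, ∞). Under the Dantzig-selector hypotheses, with h := θ₀ − θ̂, S := |T₀|, K₄ := 4/ν and ε := max_{i,j} |(V(θ₀) − J)_{ij}|: if κ(T₀; J)² > 4 S ε and F_q(T₀; J) > 0, then ‖θ̂ − θ₀‖_q ≤ (2 S^{1/q} / F_q(T₀; J)) · ( ε · 4 K₄ S γ / (κ(T₀; J)² − 4 S ε) + K₄ γ ). -/

import Mathlib

open Finset

/-- ℓ₁ norm on `Fin p → ℝ`. -/
noncomputable def l1 {p : ℕ} (v : Fin p → ℝ) : ℝ := ∑ i, |v i|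

/-- ℓ₁ norm of the subvector indexed by `T`. -/
noncomputable def l1on {p : ℕ} (T : Finset (Fin p)) (v : Fin p → ℝ) : ℝ := ∑ i ∈ T, |v i|

/-- ℓ₂ norm on `Fin p → ℝ`. -/
noncomputable def l2 {p : ℕ} (v : Fin p → ℝ) : ℝ := Real.sqrt (∑ i, (v i) ^ 2)

/-- ℓ_∞ norm on `Fin p → ℝ`. -/
noncomputable def linf {p : ℕ} (v : Fin p → ℝ) : ℝ := ⨆ i, |v i|

/-- ℓ_q norm on `Fin p → ℝ` for real `q ≥ 1`. -/
noncomputable def lqnorm {p : ℕ} (q : ℝ) (v : Fin p → ℝ) : ℝ := (∑ i, |v i| ^ q) ^ (1 / q)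

/-- Quadratic form `hᵀ J h`. -/
noncomputable def quadForm {p : ℕ} (J : Matrix (Fin p) (Fin p) ℝ) (h : Fin p → ℝ) : ℝ :=
  ∑ i, ∑ j, h i * J i j * h j

/-- The cone `C_T = {h : ‖h_{Tᶜ}‖₁ ≤ ‖h_T‖₁}`. -/
def cone {p : ℕ} (T : Finset (Fin p)) : Set (Fin p → ℝ) := {h | l1on Tᶜ h ≤ l1on T h}

/-- Compatibility factor `κ(T; J)`. -/
noncomputable def kappa {p : ℕ} (T : Finset (Fin p)) (J : Matrix (Fin p) (Fin p) ℝ) : ℝ :=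
  sInf {r | ∃ h : Fin p → ℝ, h ≠ 0 ∧ h ∈ cone T ∧
    r = Real.sqrt T.card * Real.sqrt (quadForm J h) / l1on T h}

/-- Restricted eigenvalue `RE(T; J)`. -/
noncomputable def RE {p : ℕ} (T : Finset (Fin p)) (J : Matrix (Fin p) (Fin p) ℝ) : ℝ :=
  sInf {r | ∃ h : Fin p → ℝ, h ≠ 0 ∧ h ∈ cone T ∧
    r = Real.sqrt (quadForm J h) / l2 h}

/-- Weak cone invertibility factor at `q = ∞`, `F_∞(T; J)`. -/
noncomputable def Finf {p : ℕ} (T : Finset (Fin p)) (J : Matrix (Fin p) (Fin p) ℝ) : ℝ :=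
  sInf {r | ∃ h : Fin p → ℝ, h ≠ 0 ∧ h ∈ cone T ∧
    r = Real.sqrt (quadForm J h) / linf h}

/-- Weak cone invertibility factor `F_q(T; J)` for `q ∈ [1,∞)`
(with the quadratic form without square root, as in the paper's proofs). -/
noncomputable def Fq {p : ℕ} (q : ℝ) (T : Finset (Fin p)) (J : Matrix (Fin p) (Fin p) ℝ) : ℝ :=
  sInf {r | ∃ h : Fin p → ℝ, h ≠ 0 ∧ h ∈ cone T ∧
    r = (T.card : ℝ) ^ (1 / q) * quadForm J h / (l1on T h * lqnorm q h)}

/-- `g(x) = (e^{2x} - 1)/x` for `x ≠ 0`, `g(0) = 2`. -/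
noncomputable def g (x : ℝ) : ℝ := if x = 0 then 2 else (Real.exp (2 * x) - 1) / x

/-- Gradient of the log-quasi-likelihood (divided by `n`), with `b = 0`, `Δ = 1/n`:
`ψ(θ)_i = (1/(nΔ)) Σ_k z_{k,i}(e^{-2⟨θ,z_k⟩}(x_k - x_{k-1})² - Δ)`. -/
noncomputable def psiD {n p : ℕ} (x : Fin (n + 1) → ℝ) (z : Fin n → Fin p → ℝ)
    (θ : Fin p → ℝ) (i : Fin p) : ℝ :=
  (1 / ((n : ℝ) * (1 / n))) * ∑ k, z k i *
    (Real.exp (-2 * ∑ j, θ j * z k j) * (x k.succ - x k.castSucc) ^ 2 - 1 / n)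

/-- Negative Hessian (divided by `n`):
`V(θ) = (2/(nΔ)) Σ_k e^{-2⟨θ,z_k⟩}(x_k - x_{k-1})² z_k z_kᵀ`. -/
noncomputable def VD {n p : ℕ} (x : Fin (n + 1) → ℝ) (z : Fin n → Fin p → ℝ)
    (θ : Fin p → ℝ) : Matrix (Fin p) (Fin p) ℝ := fun i j =>
  (2 / ((n : ℝ) * (1 / n))) * ∑ k, Real.exp (-2 * ∑ l, θ l * z k l) *
    (x k.succ - x k.castSucc) ^ 2 * z k i * z k j

/-- `J = (2/n) Σ_k z_k z_kᵀ`. -/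
noncomputable def JD {n p : ℕ} (z : Fin n → Fin p → ℝ) : Matrix (Fin p) (Fin p) ℝ :=
  fun i j => (2 / (n : ℝ)) * ∑ k, z k i * z k j

/-- `ε = max_{i,j} |(V(θ) - J)_{ij}|`. -/
noncomputable def epsD {n p : ℕ} (x : Fin (n + 1) → ℝ) (z : Fin n → Fin p → ℝ)
    (θ : Fin p → ℝ) : ℝ :=
  ⨆ i, ⨆ j, |VD x z θ i j - JD z i j|

/-!
Write `h = θ̂ - θ₀` and `b = ‖h_{T₀}‖₁`. Since `‖θ̂‖₁ ≤ ‖θ₀‖₁` and `θ₀` vanishes off `T₀`, `h` lies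
in the cone `C_{T₀}`, so `‖h‖₁ ≤ 2b`. With `w_k = ⟨h, z_k⟩`, the `k`-th summand of
`⟨h, ψ(θ₀) - ψ(θ̂)⟩` is `e^{-2⟨θ₀,z_k⟩}(x_k - x_{k-1})² w_k(1 - e^{-2w_k})`, and
`w(1 - e^{-2w}) = g(-w) w² ≥ ν w²` because `|w_k| ≤ C‖h‖₁ ≤ 2C‖θ₀‖₁`. Hence
`ν hᵀV(θ₀)h ≤ 2⟨h, ψ(θ₀) - ψ(θ̂)⟩ ≤ 8γb`, and replacing `V(θ₀)` by `J` costs `ε‖h‖₁² ≤ 4εb²`: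
`hᵀJh ≤ 2K₄γb + 4εb²`. The compatibility factor turns this into a bound on `b`, and the cone
invertibility factor then into a bound on `‖h‖_q`.
-/

section Norms

variable {p : ℕ}

lemma l1_nonneg (v : Fin p → ℝ) : 0 ≤ l1 v :=
  Finset.sum_nonneg fun i _ => abs_nonneg (v i)

lemma l1_pos {v : Fin p → ℝ} (hv : v ≠ 0) : 0 < l1 v := by
  obtain ⟨i, hi⟩ := Function.ne_iff.mp hv
  exact Finset.sum_pos' (fun i _ => abs_nonneg (v i)) ⟨i, Finset.mem_univ i, abs_pos.mpr hi⟩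

lemma l1_sub_le (u v : Fin p → ℝ) : l1 (u - v) ≤ l1 u + l1 v := by
  unfold l1
  rw [← Finset.sum_add_distrib]
  exact Finset.sum_le_sum fun i _ => abs_sub (u i) (v i)

lemma l1_eq_l1on_add_l1on_compl (T : Finset (Fin p)) (v : Fin p → ℝ) :
    l1 v = l1on T v + l1on Tᶜ v :=
  (Finset.sum_add_sum_compl T _).symm

lemma l1on_nonneg (T : Finset (Fin p)) (v : Fin p → ℝ) : 0 ≤ l1on T v :=
  Finset.sum_nonneg fun i _ => abs_nonneg (v i)

lemma abs_sum_mul_le_mul_l1 {v w : Fin p → ℝ} {c : ℝ} (hw : ∀ i, |w i| ≤ c) :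
    |∑ i, v i * w i| ≤ c * l1 v := by
  calc |∑ i, v i * w i| ≤ ∑ i, |v i| * c := by
        refine (Finset.abs_sum_le_sum_abs _ _).trans (Finset.sum_le_sum fun i _ => ?_)
        rw [abs_mul]
        exact mul_le_mul_of_nonneg_left (hw i) (abs_nonneg _)
    _ = c * l1 v := by rw [← Finset.sum_mul, mul_comm, l1]

lemma abs_le_linf (v : Fin p → ℝ) (i : Fin p) : |v i| ≤ linf v :=
  le_ciSup (f := fun i => |v i|) (Set.finite_range _).bddAbove i

lemma linf_nonneg (v : Fin p → ℝ) : 0 ≤ linf v :=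
  Real.iSup_nonneg fun i => abs_nonneg (v i)

lemma lqnorm_zero {q : ℝ} (hq : q ≠ 0) : lqnorm q (0 : Fin p → ℝ) = 0 := by
  simp [lqnorm, Real.zero_rpow hq, hq]

lemma lqnorm_pos {v : Fin p → ℝ} (q : ℝ) (hv : v ≠ 0) : 0 < lqnorm q v := by
  obtain ⟨i, hi⟩ := Function.ne_iff.mp hv
  have hsum : 0 < ∑ j, |v j| ^ q := Finset.sum_pos' (fun j _ => by positivity)
    ⟨i, Finset.mem_univ i, Real.rpow_pos_of_pos (abs_pos.mpr hi) q⟩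
  exact Real.rpow_pos_of_pos hsum _

lemma lqnorm_nonneg (q : ℝ) (v : Fin p → ℝ) : 0 ≤ lqnorm q v := by
  unfold lqnorm
  positivity

end Norms

section Cone

variable {p : ℕ} {T : Finset (Fin p)}

lemma sub_mem_cone_of_l1_le {θ₀ θ : Fin p → ℝ} (hsupp : ∀ i ∉ T, θ₀ i = 0)
    (hθ : l1 θ ≤ l1 θ₀) : θ - θ₀ ∈ cone T := by
  have hcompl : l1on Tᶜ (θ - θ₀) = l1on Tᶜ θ :=
    Finset.sum_congr rfl fun i hi => by
      rw [Pi.sub_apply, hsupp i (Finset.mem_compl.mp hi), sub_zero]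
  have hθ₀ : l1on Tᶜ θ₀ = 0 :=
    Finset.sum_eq_zero fun i hi => by rw [hsupp i (Finset.mem_compl.mp hi), abs_zero]
  have htri : l1on T θ₀ - l1on T θ ≤ l1on T (θ - θ₀) := by
    rw [l1on, l1on, l1on, ← Finset.sum_sub_distrib]
    exact Finset.sum_le_sum fun i _ => by
      rw [Pi.sub_apply, abs_sub_comm]; exact abs_sub_abs_le_abs_sub _ _
  rw [l1_eq_l1on_add_l1on_compl T, l1_eq_l1on_add_l1on_compl T θ₀, hθ₀] at hθ
  show l1on Tᶜ (θ - θ₀) ≤ l1on T (θ - θ₀)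
  linarith

lemma l1_le_two_mul_l1on {h : Fin p → ℝ} (hc : h ∈ cone T) : l1 h ≤ 2 * l1on T h := by
  have : l1on Tᶜ h ≤ l1on T h := hc
  linarith [l1_eq_l1on_add_l1on_compl T h]

lemma l1on_pos_of_mem_cone {h : Fin p → ℝ} (hc : h ∈ cone T) (hh : h ≠ 0) : 0 < l1on T h := by
  linarith [l1_le_two_mul_l1on hc, l1_pos hh]

end Cone

section QuadForm

variable {p : ℕ}

lemma quadForm_sub_quadForm_le {A B : Matrix (Fin p) (Fin p) ℝ} {ε : ℝ}
    (hAB : ∀ i j, |A i j - B i j| ≤ ε) (h : Fin p → ℝ) :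
    quadForm A h - quadForm B h ≤ ε * l1 h ^ 2 := by
  have hrow : ∀ i, |∑ j, h j * (A i j - B i j)| ≤ ε * l1 h := fun i =>
    abs_sum_mul_le_mul_l1 (hAB i)
  calc quadForm A h - quadForm B h = ∑ i, h i * ∑ j, h j * (A i j - B i j) := by
        simp only [quadForm, ← Finset.sum_sub_distrib, Finset.mul_sum]
        exact Finset.sum_congr rfl fun i _ => Finset.sum_congr rfl fun j _ => by ring
    _ ≤ |∑ i, h i * ∑ j, h j * (A i j - B i j)| := le_abs_self _
    _ ≤ ε * l1 h * l1 h := abs_sum_mul_le_mul_l1 hrow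
    _ = ε * l1 h ^ 2 := by ring

lemma quadForm_gram {n : ℕ} (c : ℝ) (u : Fin n → ℝ) (z : Fin n → Fin p → ℝ) (h : Fin p → ℝ) :
    quadForm (fun i j => c * ∑ k, u k * z k i * z k j) h
      = c * ∑ k, u k * (∑ i, h i * z k i) ^ 2 := by
  simp only [quadForm, sq, Finset.mul_sum, Finset.sum_mul]
  rw [Finset.sum_comm_cycle]
  refine Finset.sum_congr rfl fun k _ => ?_
  rw [Finset.sum_comm]
  exact Finset.sum_congr rfl fun j _ => Finset.sum_congr rfl fun i _ => by ring

end QuadForm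

section Factors

variable {p : ℕ} {T : Finset (Fin p)} {J : Matrix (Fin p) (Fin p) ℝ} {h : Fin p → ℝ}

lemma kappa_nonneg (T : Finset (Fin p)) (J : Matrix (Fin p) (Fin p) ℝ) : 0 ≤ kappa T J :=
  Real.sInf_nonneg (by rintro r ⟨v, -, -, rfl⟩; exact div_nonneg (by positivity) (l1on_nonneg T v))

lemma kappa_sq_mul_sq_le (hQ : 0 ≤ quadForm J h) (hc : h ∈ cone T) (hh : h ≠ 0) :
    kappa T J ^ 2 * l1on T h ^ 2 ≤ T.card * quadForm J h := by
  have hle : kappa T J ≤ √T.card * √(quadForm J h) / l1on T h :=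
    csInf_le ⟨0, by rintro r ⟨v, -, -, rfl⟩; exact div_nonneg (by positivity) (l1on_nonneg T v)⟩
      ⟨h, hh, hc, rfl⟩
  have hsq := pow_le_pow_left₀ (kappa_nonneg T J) hle 2
  rwa [div_pow, mul_pow, Real.sq_sqrt (Nat.cast_nonneg _), Real.sq_sqrt hQ,
    le_div_iff₀ (pow_pos (l1on_pos_of_mem_cone hc hh) 2)] at hsq

lemma Fq_mul_le (hJ : ∀ v, 0 ≤ quadForm J v) (q : ℝ) (hc : h ∈ cone T) (hh : h ≠ 0) :
    Fq q T J * (l1on T h * lqnorm q h) ≤ (T.card : ℝ) ^ (1 / q) * quadForm J h := by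
  have hle : Fq q T J ≤ (T.card : ℝ) ^ (1 / q) * quadForm J h / (l1on T h * lqnorm q h) :=
    csInf_le ⟨0, by
      rintro r ⟨v, -, -, rfl⟩
      exact div_nonneg (mul_nonneg (by positivity) (hJ v))
        (mul_nonneg (l1on_nonneg T v) (lqnorm_nonneg q v))⟩ ⟨h, hh, hc, rfl⟩
  rwa [le_div_iff₀ (mul_pos (l1on_pos_of_mem_cone hc hh) (lqnorm_pos q hh))] at hle

lemma l1on_le_of_quadForm_le (hJ : 0 ≤ quadForm J h) (hc : h ∈ cone T) (hh : h ≠ 0) {A B : ℝ}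
    (hQ : quadForm J h ≤ A * l1on T h + B * l1on T h ^ 2) (hκ : T.card * B < kappa T J ^ 2) :
    l1on T h ≤ A * T.card / (kappa T J ^ 2 - T.card * B) := by
  have hb := l1on_pos_of_mem_cone hc hh
  have hκQ := (kappa_sq_mul_sq_le hJ hc hh).trans
    (mul_le_mul_of_nonneg_left hQ (Nat.cast_nonneg T.card))
  rw [le_div_iff₀ (sub_pos.2 hκ)]
  refine le_of_mul_le_mul_right ?_ hb
  nlinarith

lemma lqnorm_le_of_quadForm_le (hJ : ∀ v, 0 ≤ quadForm J v) {q : ℝ} (hq : q ≠ 0)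
    (hc : h ∈ cone T) {A B : ℝ} (hA : 0 ≤ A) (hB : 0 ≤ B)
    (hQ : quadForm J h ≤ A * l1on T h + B * l1on T h ^ 2) (hκ : T.card * B < kappa T J ^ 2)
    (hF : 0 < Fq q T J) :
    lqnorm q h ≤
      (T.card : ℝ) ^ (1 / q) * (A + B * (A * T.card / (kappa T J ^ 2 - T.card * B))) /
        Fq q T J := by
  have hbound : 0 ≤ A * T.card / (kappa T J ^ 2 - T.card * B) :=
    div_nonneg (mul_nonneg hA (Nat.cast_nonneg _)) (sub_pos.2 hκ).le
  rcases eq_or_ne h 0 with rfl | hh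
  · rw [lqnorm_zero hq]
    positivity
  have hb := l1on_pos_of_mem_cone hc hh
  have hFL : Fq q T J * lqnorm q h * l1on T h ≤
      (T.card : ℝ) ^ (1 / q) * (A + B * l1on T h) * l1on T h :=
    calc Fq q T J * lqnorm q h * l1on T h = Fq q T J * (l1on T h * lqnorm q h) := by ring
      _ ≤ (T.card : ℝ) ^ (1 / q) * quadForm J h := Fq_mul_le hJ q hc hh
      _ ≤ (T.card : ℝ) ^ (1 / q) * (A * l1on T h + B * l1on T h ^ 2) := by gcongr
      _ = (T.card : ℝ) ^ (1 / q) * (A + B * l1on T h) * l1on T h := by ring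
  rw [le_div_iff₀ hF, mul_comm]
  calc Fq q T J * lqnorm q h ≤ (T.card : ℝ) ^ (1 / q) * (A + B * l1on T h) :=
        le_of_mul_le_mul_right hFL hb
    _ ≤ _ := by
      gcongr
      exact l1on_le_of_quadForm_le (hJ h) hc hh hQ hκ

end Factors

lemma g_pos (y : ℝ) : 0 < g y := by
  unfold g
  split_ifs with hy
  · norm_num
  rcases lt_or_gt_of_ne hy with hy | hy
  · exact div_pos_of_neg_of_neg (sub_neg.2 (Real.exp_lt_one_iff.2 (by linarith))) hy
  · exact div_pos (sub_pos.2 (Real.one_lt_exp_iff.2 (by linarith))) hy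

lemma g_neg_mul_sq (w : ℝ) : g (-w) * w ^ 2 = w * (1 - Real.exp (-2 * w)) := by
  rcases eq_or_ne w 0 with rfl | hw
  · simp [g]
  rw [g, if_neg (neg_ne_zero.2 hw)]
  field_simp
  ring_nf

section Model

variable {n p : ℕ} (x : Fin (n + 1) → ℝ) (z : Fin n → Fin p → ℝ)

lemma psiD_eq (hn : 0 < n) (θ : Fin p → ℝ) (i : Fin p) :
    psiD x z θ i = ∑ k, z k i *
      (Real.exp (-2 * ∑ j, θ j * z k j) * (x k.succ - x k.castSucc) ^ 2 - 1 / n) := by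
  have hnΔ : (n : ℝ) * (1 / n) = 1 := by field_simp
  rw [psiD, hnΔ, div_one, one_mul]

lemma sum_mul_psiD_sub_psiD_add (hn : 0 < n) (θ h : Fin p → ℝ) :
    ∑ i, h i * (psiD x z θ i - psiD x z (θ + h) i) =
      ∑ k, Real.exp (-2 * ∑ j, θ j * z k j) * (x k.succ - x k.castSucc) ^ 2 *
        ((∑ i, h i * z k i) * (1 - Real.exp (-2 * ∑ i, h i * z k i))) := by
  have hexp : ∀ k, Real.exp (-2 * ∑ j, (θ + h) j * z k j) =
      Real.exp (-2 * ∑ j, θ j * z k j) * Real.exp (-2 * ∑ j, h j * z k j) := fun k => by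
    rw [← Real.exp_add]
    simp only [Pi.add_apply, add_mul, Finset.sum_add_distrib]
    ring_nf
  simp only [psiD_eq x z hn, hexp]
  simp only [← Finset.sum_sub_distrib, Finset.mul_sum, Finset.sum_mul]
  rw [Finset.sum_comm]
  exact Finset.sum_congr rfl fun k _ => Finset.sum_congr rfl fun i _ => by ring

lemma quadForm_VD (hn : 0 < n) (θ h : Fin p → ℝ) :
    quadForm (VD x z θ) h = 2 * ∑ k, Real.exp (-2 * ∑ j, θ j * z k j) *
      (x k.succ - x k.castSucc) ^ 2 * (∑ i, h i * z k i) ^ 2 := by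
  have h2 : (2 : ℝ) / (n * (1 / n)) = 2 := by field_simp
  unfold VD
  rw [h2]
  exact quadForm_gram 2 _ z h

lemma quadForm_JD_nonneg (h : Fin p → ℝ) : 0 ≤ quadForm (JD z) h := by
  have hgram := quadForm_gram (2 / n) (fun _ => 1) z h
  simp only [one_mul] at hgram
  unfold JD
  rw [hgram]
  positivity

lemma nu_mul_quadForm_VD_le (hn : 0 < n) {θ h : Fin p → ℝ} {ν : ℝ}
    (hν : ∀ k, ν ≤ g (-(∑ i, h i * z k i))) :
    ν * quadForm (VD x z θ) h ≤ 2 * ∑ i, h i * (psiD x z θ i - psiD x z (θ + h) i) := by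
  rw [quadForm_VD x z hn, sum_mul_psiD_sub_psiD_add x z hn, mul_left_comm, Finset.mul_sum]
  gcongr 2 * ?_
  refine Finset.sum_le_sum fun k _ => ?_
  rw [← g_neg_mul_sq]
  calc ν * (Real.exp (-2 * ∑ j, θ j * z k j) * (x k.succ - x k.castSucc) ^ 2 *
        (∑ i, h i * z k i) ^ 2)
      = Real.exp (-2 * ∑ j, θ j * z k j) * (x k.succ - x k.castSucc) ^ 2 *
        (ν * (∑ i, h i * z k i) ^ 2) := by ring
    _ ≤ _ := by gcongr; exact hν k

lemma abs_le_epsD (θ : Fin p → ℝ) (i j : Fin p) : |VD x z θ i j - JD z i j| ≤ epsD x z θ :=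
  (le_ciSup (f := fun j => |VD x z θ i j - JD z i j|) (Set.finite_range _).bddAbove j).trans
    (le_ciSup (f := fun i => ⨆ j, |VD x z θ i j - JD z i j|) (Set.finite_range _).bddAbove i)

lemma epsD_nonneg (θ : Fin p → ℝ) : 0 ≤ epsD x z θ :=
  Real.iSup_nonneg fun _ => Real.iSup_nonneg fun _ => abs_nonneg _

lemma quadForm_JD_le_of_dantzig (hn : 0 < n) {C : ℝ} (hC : 0 ≤ C) (hz : ∀ k i, |z k i| ≤ C)
    {T : Finset (Fin p)} {θ₀ θhat : Fin p → ℝ} (hc : θhat - θ₀ ∈ cone T)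
    (hmin : l1 θhat ≤ l1 θ₀) {ν : ℝ} (hν0 : 0 < ν)
    (hν : ν ∈ lowerBounds (g '' Set.Icc (-(2 * C * l1 θ₀)) (2 * C * l1 θ₀))) {γ : ℝ}
    (hfeas : linf (psiD x z θhat) ≤ γ) (htrue : linf (psiD x z θ₀) ≤ γ) :
    quadForm (JD z) (θhat - θ₀) ≤
      2 * (4 / ν) * γ * l1on T (θhat - θ₀) + 4 * epsD x z θ₀ * l1on T (θhat - θ₀) ^ 2 := by
  set h := θhat - θ₀
  have hl1 : l1 h ≤ 2 * l1on T h := l1_le_two_mul_l1on hc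
  have hg : ∀ k, ν ≤ g (-(∑ i, h i * z k i)) := fun k => by
    have hw : |∑ i, h i * z k i| ≤ 2 * C * l1 θ₀ :=
      calc |∑ i, h i * z k i| ≤ C * l1 h := abs_sum_mul_le_mul_l1 (hz k)
        _ ≤ C * (l1 θhat + l1 θ₀) := by gcongr; exact l1_sub_le θhat θ₀
        _ ≤ 2 * C * l1 θ₀ := by nlinarith
    obtain ⟨hw₁, hw₂⟩ := abs_le.1 hw
    exact hν ⟨_, ⟨by linarith, by linarith⟩, rfl⟩
  have hgrad : ∑ i, h i * (psiD x z θ₀ i - psiD x z θhat i) ≤ (γ + γ) * l1 h :=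
    (le_abs_self _).trans <| abs_sum_mul_le_mul_l1 fun i => (abs_sub _ _).trans <|
      add_le_add ((abs_le_linf _ i).trans htrue) ((abs_le_linf _ i).trans hfeas)
  have hV : quadForm (VD x z θ₀) h ≤ 2 * (4 / ν) * γ * l1on T h := by
    have hνV := nu_mul_quadForm_VD_le x z hn (θ := θ₀) hg
    rw [add_sub_cancel] at hνV
    rw [show 2 * (4 / ν) * γ * l1on T h = 8 * γ * l1on T h / ν by ring, le_div_iff₀ hν0]
    nlinarith [linf_nonneg (psiD x z θ₀)]
  have hJV : quadForm (JD z) h - quadForm (VD x z θ₀) h ≤ epsD x z θ₀ * l1 h ^ 2 :=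
    quadForm_sub_quadForm_le (fun i j => abs_sub_comm (VD x z θ₀ i j) _ ▸ abs_le_epsD x z θ₀ i j) h
  have hl1sq : l1 h ^ 2 ≤ (2 * l1on T h) ^ 2 := pow_le_pow_left₀ (l1_nonneg h) hl1 2
  nlinarith [epsD_nonneg x z θ₀]

end Model

theorem theorem_3_2_ii_general
    (n p : ℕ) (hn : 0 < n)
    (C : ℝ) (hC : 0 < C)
    (x : Fin (n + 1) → ℝ) (z : Fin n → Fin p → ℝ)
    (hz : ∀ k i, |z k i| ≤ C)
    (θ₀ θhat : Fin p → ℝ)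
    (ν : ℝ) (hν : IsLeast (g '' Set.Icc (-(2 * C * l1 θ₀)) (2 * C * l1 θ₀)) ν)
    (γ : ℝ) (hγ : 0 < γ)
    (hfeas : linf (psiD x z θhat) ≤ γ)
    (hmin : l1 θhat ≤ l1 θ₀)
    (htrue : linf (psiD x z θ₀) ≤ γ)
    (q : ℝ) (hq : 1 < q)
    (hκ : 4 * ((Finset.univ.filter fun j => θ₀ j ≠ 0).card : ℝ) * epsD x z θ₀ <
      kappa (Finset.univ.filter fun j => θ₀ j ≠ 0) (JD z) ^ 2)
    (hF : 0 < Fq q (Finset.univ.filter fun j => θ₀ j ≠ 0) (JD z)) :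
    lqnorm q (θhat - θ₀) ≤
      2 * ((Finset.univ.filter fun j => θ₀ j ≠ 0).card : ℝ) ^ (1 / q) /
          Fq q (Finset.univ.filter fun j => θ₀ j ≠ 0) (JD z) *
        (epsD x z θ₀ *
            (4 * (4 / ν) * ((Finset.univ.filter fun j => θ₀ j ≠ 0).card : ℝ) * γ /
              (kappa (Finset.univ.filter fun j => θ₀ j ≠ 0) (JD z) ^ 2 -
                4 * ((Finset.univ.filter fun j => θ₀ j ≠ 0).card : ℝ) * epsD x z θ₀)) +
          4 / ν * γ) := by
  set T := Finset.univ.filter fun j => θ₀ j ≠ 0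
  have hν0 : 0 < ν := by
    obtain ⟨y, -, rfl⟩ := hν.1
    exact g_pos y
  have hε := epsD_nonneg x z θ₀
  have hc : θhat - θ₀ ∈ cone T := sub_mem_cone_of_l1_le (fun i hi => by simpa [T] using hi) hmin
  have hQ := quadForm_JD_le_of_dantzig x z hn hC.le hz hc hmin hν0 hν.2 hfeas htrue
  calc lqnorm q (θhat - θ₀) ≤ _ :=
        lqnorm_le_of_quadForm_le (quadForm_JD_nonneg z) (by positivity) hc (by positivity)
          (by positivity) hQ (by linarith) hF
    _ = _ := by
      field_simp
      ring

/-- Theorem 3.2(ii), deterministic core: for `q ∈ (1,∞)`, with `S := |T₀|`, `K₄ := 4/ν`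
and `ε := max_{i,j} |(V(θ₀) - J)_{ij}|`: if `κ(T₀;J)² > 4Sε` and `F_q(T₀;J) > 0`, then
`‖θ̂ - θ₀‖_q ≤ (2S^{1/q}/F_q(T₀;J)) (ε · 4K₄Sγ/(κ(T₀;J)² - 4Sε) + K₄γ)`. -/
theorem theorem_3_2_ii
    (n p : ℕ) (hn : 0 < n) (hp : 0 < p)
    (C : ℝ) (hC : 0 < C)
    (x : Fin (n + 1) → ℝ) (z : Fin n → Fin p → ℝ)
    (hz : ∀ k i, |z k i| ≤ C)
    (θ₀ θhat : Fin p → ℝ)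
    (ν : ℝ) (hν : IsLeast (g '' Set.Icc (-(2 * C * l1 θ₀)) (2 * C * l1 θ₀)) ν)
    (γ : ℝ) (hγ : 0 < γ)
    (hfeas : linf (psiD x z θhat) ≤ γ)
    (hmin : l1 θhat ≤ l1 θ₀)
    (htrue : linf (psiD x z θ₀) ≤ γ)
    (hθ₀ : θ₀ ≠ 0) (q : ℝ) (hq : 1 < q)
    (hκ : 4 * ((Finset.univ.filter fun j => θ₀ j ≠ 0).card : ℝ) * epsD x z θ₀ <
      kappa (Finset.univ.filter fun j => θ₀ j ≠ 0) (JD z) ^ 2)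
    (hF : 0 < Fq q (Finset.univ.filter fun j => θ₀ j ≠ 0) (JD z)) :
    lqnorm q (θhat - θ₀) ≤
      2 * ((Finset.univ.filter fun j => θ₀ j ≠ 0).card : ℝ) ^ (1 / q) /
          Fq q (Finset.univ.filter fun j => θ₀ j ≠ 0) (JD z) *
        (epsD x z θ₀ *
            (4 * (4 / ν) * ((Finset.univ.filter fun j => θ₀ j ≠ 0).card : ℝ) * γ /
              (kappa (Finset.univ.filter fun j => θ₀ j ≠ 0) (JD z) ^ 2 -
                4 * ((Finset.univ.filter fun j => θ₀ j ≠ 0).card : ℝ) * epsD x z θ₀)) +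
          4 / ν * γ) :=
  theorem_3_2_ii_general n p hn C hC x z hz θ₀ θhat ν hν γ hγ hfeas hmin htrue q hq hκ hF
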